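/- arXiv:2208.11377 — 5 statements merged into one kernel-verified Lean document; each statement's English description precedes it below -/
import Mathlib

section
/- Let W ∈ ℝ^{N×N} be a nonnegative matrix and identify it with the weighted directed graph on vertex set {1,…,N} having an edge from vertex v to vertex u if and only if W_{u,v} > 0; let L := diag(W 1_N) − W be its Laplacian. If this graph is rooted at some vertex r, then the null space of L is exactly the span of the all-ones vector: null(L) = {c·1_N : c ∈ ℝ}. -/
open Matrix

private lemma lap_key (N : ℕ) (W : Matrix (Fin N) (Fin N) ℝ) (x : Fin N → ℝ)
    (hx : (Matrix.diagonal (W *ᵥ (1 : Fin N → ℝ)) - W) *ᵥ x = 0) (u : Fin N) :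
    ∑ j, W u j * (x u - x j) = 0 := by
  have h := congrFun hx u
  simp only [Matrix.mulVec, dotProduct, Matrix.diagonal, Matrix.sub_apply,
    Matrix.of_apply, Pi.sub_apply, Pi.zero_apply, Pi.one_apply, mul_one, sub_mul, ite_mul,
    zero_mul, Finset.sum_sub_distrib, Finset.sum_ite_eq, Finset.mem_univ, if_true] at h
  simp only [mul_sub, Finset.sum_sub_distrib, ← Finset.sum_mul]
  linarith

private lemma lap_max (N : ℕ) (W : Matrix (Fin N) (Fin N) ℝ)
    (hWnn : ∀ u v, 0 ≤ W u v) (r : Fin N)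
    (hroot : ∀ v : Fin N, Relation.ReflTransGen (fun a b => 0 < W b a) r v)
    (x : Fin N → ℝ)
    (hx : (Matrix.diagonal (W *ᵥ (1 : Fin N → ℝ)) - W) *ᵥ x = 0)
    (v : Fin N) (hmax : ∀ j, x j ≤ x v) : x r = x v := by
  have prop : ∀ u, (∀ j, x j ≤ x u) → ∀ j, 0 < W u j → x j = x u := by
    intro u hu j hj
    have key := lap_key N W x hx u
    have hnn : ∀ i ∈ Finset.univ, 0 ≤ W u i * (x u - x i) := fun i _ =>
      mul_nonneg (hWnn u i) (by linarith [hu i])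
    have := (Finset.sum_eq_zero_iff_of_nonneg hnn).mp key j (Finset.mem_univ j)
    rcases mul_eq_zero.mp this with h | h
    · exact absurd h (ne_of_gt hj)
    · linarith [sub_eq_zero.mp h]
  have claim : ∀ c, Relation.ReflTransGen (fun a b => 0 < W b a) r c →
      x c = x v → x r = x v := by
    intro c h
    induction h with
    | refl => exact fun h => h
    | tail hrb hedge ih =>
      rename_i b c'
      intro hc
      have hle : ∀ j, x j ≤ x c' := fun j => hc ▸ hmax j
      have hb : x b = x c' := prop c' hle b hedge
      exact ih (by rw [hb, hc])
  exact claim v (hroot v) rfl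

/-- For a nonnegative weight matrix `W` (edge from `v` to `u` iff `W u v > 0`) whose
associated digraph is rooted at `r`, the null space of the Laplacian
`L = diag(W 1) - W` is exactly the span of the all-ones vector. -/
theorem stmt_0 (N : ℕ) (W : Matrix (Fin N) (Fin N) ℝ)
    (hWnn : ∀ u v, 0 ≤ W u v) (r : Fin N)
    (hroot : ∀ v : Fin N, Relation.ReflTransGen (fun a b => 0 < W b a) r v) :
    {x : Fin N → ℝ | (Matrix.diagonal (W *ᵥ (1 : Fin N → ℝ)) - W) *ᵥ x = 0}
      = {x : Fin N → ℝ | ∃ c : ℝ, x = fun _ => c} := by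
  ext x
  simp only [Set.mem_setOf_eq]
  constructor
  · intro hx
    refine ⟨x r, funext fun j => ?_⟩
    obtain ⟨vmax, _, hmax⟩ := Finset.exists_max_image Finset.univ x ⟨r, Finset.mem_univ r⟩
    have hM : x r = x vmax := lap_max N W hWnn r hroot x hx vmax
      (fun j => hmax j (Finset.mem_univ j))
    have hx' : (Matrix.diagonal (W *ᵥ (1 : Fin N → ℝ)) - W) *ᵥ (-x) = 0 := by
      rw [Matrix.mulVec_neg, hx, neg_zero]
    obtain ⟨vmin, _, hmin⟩ := Finset.exists_max_image Finset.univ (-x) ⟨r, Finset.mem_univ r⟩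
    have hm : (-x) r = (-x) vmin := lap_max N W hWnn r hroot (-x) hx' vmin
      (fun j => hmin j (Finset.mem_univ j))
    have h1 : x j ≤ x r := by rw [hM]; exact hmax j (Finset.mem_univ j)
    have h2 : x r ≤ x j := by
      have := hmin j (Finset.mem_univ j)
      simp only [Pi.neg_apply] at hm this
      linarith
    linarith
  · rintro ⟨c, rfl⟩
    funext u
    simp only [Matrix.mulVec, dotProduct, Matrix.diagonal, Matrix.sub_apply,
      Matrix.of_apply, Pi.sub_apply, Pi.zero_apply, Pi.one_apply, mul_one, sub_mul, ite_mul,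
      zero_mul, Finset.sum_sub_distrib, Finset.sum_ite_eq, Finset.mem_univ, if_true,
      Finset.sum_mul, sub_self]
end

section
/- Let W ∈ ℝ^{N×N} be a nonnegative matrix, identified with the weighted directed graph on vertex set {1,…,N} having an edge from v to u if and only if W_{u,v} > 0, and let L := diag(W 1_N) − W be its Laplacian. Assume the graph is strongly connected and W is balanced (W 1_N = Wᵀ 1_N). Then λ̄ := λ₂(Lᵀ + L) > 0 (the second-smallest eigenvalue of the symmetric matrix Lᵀ + L), and for every n ≥ 1 and every y ∈ ℝ^{Nn}: ⟨y, (L ⊗ I_n) y⟩ ≥ (λ̄/2) ‖(I_{Nn} − (1/N)(1_N 1_Nᵀ) ⊗ I_n) y‖². -/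
/-!
For balanced `W` the quadratic form of `S = Lᵀ + L` is the Dirichlet energy
`∑ u v, W u v (x u - x v)²`. It is nonnegative, invariant under adding constants, zero on
constants, and by strong connectivity zero only on constants. Expanding in an orthonormal
eigenbasis of `S`, the smallest eigenvalue is therefore `0` with a constant eigenvector, and
`λ₂ > 0` because two orthonormal eigenvectors cannot both be constant. Every vector
orthogonal to the constants, in particular the centred vector `x - mean x`, which has the same
energy as `x`, satisfies `λ₂ ‖z‖² ≤ zᵀ S z = 2 xᵀ L x`. The Kronecker bound is this inequality
summed over the `n` slices `v ↦ y (v, j)`.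
-/

open Matrix Kronecker

section Laplacian

variable {ι R : Type*} [Fintype ι] [CommRing R]

def laplacian [DecidableEq ι] (W : Matrix ι ι R) : Matrix ι ι R := diagonal (W *ᵥ 1) - W

def dirichletEnergy (W : Matrix ι ι R) (x : ι → R) : R := ∑ u, ∑ v, W u v * (x u - x v) ^ 2

theorem dotProduct_transpose_add_mulVec_self (A : Matrix ι ι R) (x : ι → R) :
    x ⬝ᵥ ((Aᵀ + A) *ᵥ x) = 2 * (x ⬝ᵥ (A *ᵥ x)) := by
  rw [add_mulVec, dotProduct_add, mulVec_transpose, dotProduct_comm, ← dotProduct_mulVec, two_mul]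

theorem dotProduct_laplacian_mulVec [DecidableEq ι] (W : Matrix ι ι R) (x : ι → R) :
    x ⬝ᵥ (laplacian W *ᵥ x) = ∑ u, ∑ v, W u v * (x u * (x u - x v)) := by
  rw [laplacian, sub_mulVec, dotProduct_sub]
  simp only [dotProduct, mulVec_diagonal]
  simp only [mulVec, dotProduct, Pi.one_apply, mul_one, Finset.mul_sum, Finset.sum_mul,
    ← Finset.sum_sub_distrib]
  exact Finset.sum_congr rfl fun u _ => Finset.sum_congr rfl fun v _ => by ring

theorem sum_mul_sub_eq_zero_of_balanced {W : Matrix ι ι R} (hbal : W *ᵥ 1 = Wᵀ *ᵥ 1)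
    (f : ι → R) : ∑ u, ∑ v, W u v * (f u - f v) = 0 := by
  have hrow_col : ∀ u, ∑ v, W u v = ∑ v, W v u := fun u => by
    simpa [mulVec, dotProduct] using congrFun hbal u
  simp only [mul_sub, Finset.sum_sub_distrib, ← Finset.sum_mul, hrow_col]
  rw [Finset.sum_comm (f := fun u v => W u v * f v)]
  simp only [← Finset.sum_mul, sub_self]

theorem two_mul_dotProduct_laplacian_mulVec [DecidableEq ι] {W : Matrix ι ι R}
    (hbal : W *ᵥ 1 = Wᵀ *ᵥ 1) (x : ι → R) :
    2 * (x ⬝ᵥ (laplacian W *ᵥ x)) = dirichletEnergy W x := by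
  have hsq := sum_mul_sub_eq_zero_of_balanced hbal (fun u => x u ^ 2)
  rw [dotProduct_laplacian_mulVec, dirichletEnergy, ← sub_zero (2 * _), ← hsq]
  simp only [Finset.mul_sum, ← Finset.sum_sub_distrib]
  exact Finset.sum_congr rfl fun u _ => Finset.sum_congr rfl fun v _ => by ring

theorem dirichletEnergy_sub_const (W : Matrix ι ι R) (x : ι → R) (c : R) :
    dirichletEnergy W (fun u => x u - c) = dirichletEnergy W x := by
  simp only [dirichletEnergy, sub_sub_sub_cancel_right]

theorem dirichletEnergy_const (W : Matrix ι ι R) (c : R) :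
    dirichletEnergy W (fun _ => c) = 0 := by
  simp [dirichletEnergy]

end Laplacian

section RealDirichletEnergy

variable {ι : Type*} [Fintype ι] {W : Matrix ι ι ℝ}

theorem dirichletEnergy_nonneg (hW : ∀ u v, 0 ≤ W u v) (x : ι → ℝ) :
    0 ≤ dirichletEnergy W x :=
  Finset.sum_nonneg fun u _ => Finset.sum_nonneg fun v _ => mul_nonneg (hW u v) (sq_nonneg _)

theorem eq_of_dirichletEnergy_eq_zero (hW : ∀ u v, 0 ≤ W u v)
    (hconn : ∀ u v, Relation.ReflTransGen (fun a b => 0 < W b a) u v) {x : ι → ℝ}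
    (hx : dirichletEnergy W x = 0) (a b : ι) : x a = x b := by
  have hterm : ∀ u v, W u v * (x u - x v) ^ 2 = 0 := fun u v => by
    have hrow := (Fintype.sum_eq_zero_iff_of_nonneg fun u => Finset.sum_nonneg fun v _ =>
      mul_nonneg (hW u v) (sq_nonneg (x u - x v))).mp hx
    exact congrFun ((Fintype.sum_eq_zero_iff_of_nonneg fun v =>
      mul_nonneg (hW u v) (sq_nonneg (x u - x v))).mp (congrFun hrow u)) v
  have hedge : ∀ u v, 0 < W v u → x u = x v := fun u v h => by
    have := (mul_eq_zero.mp (hterm v u)).resolve_left h.ne'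
    linarith [pow_eq_zero_iff (n := 2) two_ne_zero |>.mp this]
  induction hconn a b with
  | refl => rfl
  | tail _ h ih => exact ih.trans (hedge _ _ h)

end RealDirichletEnergy

section ConstantVectors

variable {ι : Type*} [Fintype ι]

theorem dotProduct_sq_of_forall_eq {u v : ι → ℝ} (hu : ∀ a b, u a = u b)
    (hv : ∀ a b, v a = v b) : (u ⬝ᵥ v) ^ 2 = (u ⬝ᵥ u) * (v ⬝ᵥ v) := by
  cases isEmpty_or_nonempty ι with
  | inl _ => simp [dotProduct]
  | inr h =>
    obtain ⟨a⟩ := h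
    rw [funext fun b => hu b a, funext fun b => hv b a]
    simp only [dotProduct, Finset.sum_const, Finset.card_univ, nsmul_eq_mul]
    ring

theorem dotProduct_eq_zero_of_forall_eq {u z : ι → ℝ} (hu : ∀ a b, u a = u b)
    (hz : ∑ a, z a = 0) : u ⬝ᵥ z = 0 := by
  cases isEmpty_or_nonempty ι with
  | inl _ => simp [dotProduct]
  | inr h =>
    obtain ⟨a⟩ := h
    rw [funext fun b => hu b a, dotProduct, ← Finset.mul_sum, hz, mul_zero]

theorem centering_mulVec [DecidableEq ι] (x : ι → ℝ) :
    (1 - (Fintype.card ι : ℝ)⁻¹ • of fun _ _ => (1 : ℝ)) *ᵥ x =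
      fun u => x u - (Fintype.card ι : ℝ)⁻¹ * ∑ v, x v := by
  ext u
  rw [sub_mulVec, one_mulVec, smul_mulVec]
  simp [mulVec, dotProduct]

theorem sum_sub_mean [Nonempty ι] (x : ι → ℝ) :
    ∑ u, (x u - (Fintype.card ι : ℝ)⁻¹ * ∑ v, x v) = 0 := by
  rw [Finset.sum_sub_distrib, Finset.sum_const, Finset.card_univ, nsmul_eq_mul,
    mul_inv_cancel_left₀ (Nat.cast_ne_zero.mpr Fintype.card_ne_zero), sub_self]

end ConstantVectors

theorem OrthonormalBasis.dotProduct_eq_sum {ι : Type*} [Fintype ι]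
    (b : OrthonormalBasis ι ℝ (EuclideanSpace ℝ ι)) (x y : ι → ℝ) :
    x ⬝ᵥ y = ∑ i, (b i ⬝ᵥ x) * (b i ⬝ᵥ y) := by
  have := b.sum_inner_mul_inner (WithLp.toLp 2 y) (WithLp.toLp 2 x)
  simp only [EuclideanSpace.inner_eq_star_dotProduct, star_trivial] at this
  rw [← this]
  exact Finset.sum_congr rfl fun i _ => by rw [dotProduct_comm x, mul_comm]

namespace Matrix.IsHermitian

section Eigenbasis

variable {ι : Type*} [Fintype ι] [DecidableEq ι] {W S : Matrix ι ι ℝ} (hS : S.IsHermitian)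

theorem eigenvectorBasis_dotProduct (i j : ι) :
    hS.eigenvectorBasis i ⬝ᵥ hS.eigenvectorBasis j = if i = j then 1 else 0 := by
  simpa [EuclideanSpace.inner_eq_star_dotProduct, eq_comm] using
    hS.eigenvectorBasis.inner_eq_ite j i

theorem eigenvectorBasis_dotProduct_mulVec (i : ι) (x : ι → ℝ) :
    hS.eigenvectorBasis i ⬝ᵥ (S *ᵥ x) = hS.eigenvalues i * (hS.eigenvectorBasis i ⬝ᵥ x) := by
  rw [dotProduct_mulVec, ← mulVec_transpose, ← conjTranspose_eq_transpose_of_trivial, hS.eq,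
    hS.mulVec_eigenvectorBasis, smul_dotProduct, smul_eq_mul]

theorem eigenvectorBasis_dotProduct_mulVec_self (i : ι) :
    hS.eigenvectorBasis i ⬝ᵥ (S *ᵥ hS.eigenvectorBasis i) = hS.eigenvalues i := by
  rw [eigenvectorBasis_dotProduct_mulVec, eigenvectorBasis_dotProduct, if_pos rfl, mul_one]

theorem dotProduct_mulVec_eq_sum_eigenvalues (x : ι → ℝ) :
    x ⬝ᵥ (S *ᵥ x) = ∑ i, hS.eigenvalues i * (hS.eigenvectorBasis i ⬝ᵥ x) ^ 2 := by
  rw [hS.eigenvectorBasis.dotProduct_eq_sum]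
  exact Finset.sum_congr rfl fun i _ => by rw [hS.eigenvectorBasis_dotProduct_mulVec]; ring

theorem eigenvalues_nonneg_of_eq_dirichletEnergy (hW : ∀ u v, 0 ≤ W u v)
    (hq : ∀ x, x ⬝ᵥ (S *ᵥ x) = dirichletEnergy W x) (i : ι) : 0 ≤ hS.eigenvalues i := by
  rw [← hS.eigenvectorBasis_dotProduct_mulVec_self, hq]
  exact dirichletEnergy_nonneg hW _

theorem eigenvectorBasis_apply_eq_of_eigenvalues_eq_zero (hW : ∀ u v, 0 ≤ W u v)
    (hconn : ∀ u v, Relation.ReflTransGen (fun a b => 0 < W b a) u v)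
    (hq : ∀ x, x ⬝ᵥ (S *ᵥ x) = dirichletEnergy W x) {i : ι} (hi : hS.eigenvalues i = 0)
    (a b : ι) : hS.eigenvectorBasis i a = hS.eigenvectorBasis i b :=
  eq_of_dirichletEnergy_eq_zero hW hconn
    (by rw [← hq, hS.eigenvectorBasis_dotProduct_mulVec_self, hi]) a b

end Eigenbasis

section SortedEigenvalues

variable {N : ℕ} {W S : Matrix (Fin N) (Fin N) ℝ} (hS : S.IsHermitian)

theorem eigenvalues_sort_mul_dotProduct_self_le (k : Fin N) {x : Fin N → ℝ}
    (hx : ∀ j < k, hS.eigenvectorBasis (Tuple.sort hS.eigenvalues j) ⬝ᵥ x = 0) :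
    hS.eigenvalues (Tuple.sort hS.eigenvalues k) * (x ⬝ᵥ x) ≤ x ⬝ᵥ (S *ᵥ x) := by
  set σ := Tuple.sort hS.eigenvalues
  rw [hS.eigenvectorBasis.dotProduct_eq_sum x x, hS.dotProduct_mulVec_eq_sum_eigenvalues,
    Finset.mul_sum]
  refine Finset.sum_le_sum fun i _ => ?_
  rw [← sq]
  obtain hlt | hle := lt_or_ge (σ.symm i) k
  · have h0 := hx _ hlt
    rw [Equiv.apply_symm_apply] at h0
    rw [h0, zero_pow two_ne_zero, mul_zero, mul_zero]
  · have hmono := Tuple.monotone_sort hS.eigenvalues hle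
    rw [Function.comp_apply, Function.comp_apply, Equiv.apply_symm_apply] at hmono
    exact mul_le_mul_of_nonneg_right hmono (sq_nonneg _)

theorem eigenvalues_sort_zero_eq_zero (hW : ∀ u v, 0 ≤ W u v)
    (hq : ∀ x, x ⬝ᵥ (S *ᵥ x) = dirichletEnergy W x) (hN : 0 < N) :
    hS.eigenvalues (Tuple.sort hS.eigenvalues ⟨0, hN⟩) = 0 := by
  refine le_antisymm ?_ (hS.eigenvalues_nonneg_of_eq_dirichletEnergy hW hq _)
  have hbound := hS.eigenvalues_sort_mul_dotProduct_self_le ⟨0, hN⟩ (x := 1)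
    fun j hj => absurd (Fin.lt_def.mp hj) (Nat.not_lt_zero _)
  rw [hq, show (1 : Fin N → ℝ) = fun _ => 1 from rfl, dirichletEnergy_const] at hbound
  refine nonpos_of_mul_nonpos_left hbound ?_
  simpa [dotProduct] using hN

theorem spectralGap_pos (hW : ∀ u v, 0 ≤ W u v)
    (hconn : ∀ u v, Relation.ReflTransGen (fun a b => 0 < W b a) u v)
    (hq : ∀ x, x ⬝ᵥ (S *ᵥ x) = dirichletEnergy W x) (hN : 1 < N) :
    0 < hS.eigenvalues (Tuple.sort hS.eigenvalues ⟨1, hN⟩) := by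
  refine (hS.eigenvalues_nonneg_of_eq_dirichletEnergy hW hq _).lt_of_ne' fun h1 => ?_
  have h0 : hS.eigenvalues (Tuple.sort hS.eigenvalues ⟨0, by omega⟩) = 0 :=
    le_antisymm (h1 ▸ Tuple.monotone_sort hS.eigenvalues (Fin.mk_le_mk.mpr zero_le_one))
      (hS.eigenvalues_nonneg_of_eq_dirichletEnergy hW hq _)
  have := dotProduct_sq_of_forall_eq
    (hS.eigenvectorBasis_apply_eq_of_eigenvalues_eq_zero hW hconn hq h0)
    (hS.eigenvectorBasis_apply_eq_of_eigenvalues_eq_zero hW hconn hq h1)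
  simp [hS.eigenvectorBasis_dotProduct] at this

theorem spectralGap_mul_le (hW : ∀ u v, 0 ≤ W u v)
    (hconn : ∀ u v, Relation.ReflTransGen (fun a b => 0 < W b a) u v)
    (hq : ∀ x, x ⬝ᵥ (S *ᵥ x) = dirichletEnergy W x) (hN : 1 < N) (x : Fin N → ℝ) :
    hS.eigenvalues (Tuple.sort hS.eigenvalues ⟨1, hN⟩) *
        (((1 - (N : ℝ)⁻¹ • of fun _ _ => 1 : Matrix (Fin N) (Fin N) ℝ) *ᵥ x) ⬝ᵥ
          ((1 - (N : ℝ)⁻¹ • of fun _ _ => 1 : Matrix (Fin N) (Fin N) ℝ) *ᵥ x)) ≤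
      x ⬝ᵥ (S *ᵥ x) := by
  have hN0 : 0 < N := by omega
  have : Nonempty (Fin N) := ⟨⟨0, hN0⟩⟩
  have hz := centering_mulVec x
  rw [Fintype.card_fin] at hz
  rw [hz, hq x, ← dirichletEnergy_sub_const W x, ← hq]
  refine hS.eigenvalues_sort_mul_dotProduct_self_le _ fun j hj => ?_
  obtain rfl : j = ⟨0, hN0⟩ := Fin.ext (by simpa [Fin.lt_def] using hj)
  refine dotProduct_eq_zero_of_forall_eq
    (hS.eigenvectorBasis_apply_eq_of_eigenvalues_eq_zero hW hconn hq
      (hS.eigenvalues_sort_zero_eq_zero hW hq hN0)) ?_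
  simpa using sum_sub_mean x

end SortedEigenvalues

end Matrix.IsHermitian

section Kronecker

variable {ι κ R : Type*} [Fintype ι] [Fintype κ] [CommSemiring R]

theorem dotProduct_eq_sum_slices (a b : ι × κ → R) :
    a ⬝ᵥ b = ∑ j, (fun u => a (u, j)) ⬝ᵥ fun u => b (u, j) := by
  rw [dotProduct, Fintype.sum_prod_type, Finset.sum_comm]
  rfl

theorem kronecker_one_mulVec_slice [DecidableEq κ] (A : Matrix ι ι R) (y : ι × κ → R) (j : κ) :
    (fun u => ((A ⊗ₖ (1 : Matrix κ κ R)) *ᵥ y) (u, j)) = A *ᵥ fun v => y (v, j) := by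
  ext u
  simp [mulVec, dotProduct, Fintype.sum_prod_type, one_apply]

end Kronecker

/-- For a balanced, strongly connected nonnegative weight matrix `W` with Laplacian `L`,
the second-smallest eigenvalue `λ̄` of `Lᵀ + L` is positive, and
`⟨y, (L ⊗ I_n) y⟩ ≥ (λ̄/2) ‖(I − (1/N)(11ᵀ) ⊗ I_n) y‖²` for all `y`. -/
theorem stmt_1 (N : ℕ) (hN : 1 < N) (W : Matrix (Fin N) (Fin N) ℝ)
    (hWnn : ∀ u v, 0 ≤ W u v)
    (hconn : ∀ u v : Fin N, Relation.ReflTransGen (fun a b => 0 < W b a) u v)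
    (hbal : W *ᵥ (1 : Fin N → ℝ) = Wᵀ *ᵥ (1 : Fin N → ℝ))
    (L : Matrix (Fin N) (Fin N) ℝ)
    (hL : L = Matrix.diagonal (W *ᵥ (1 : Fin N → ℝ)) - W)
    (S : Matrix (Fin N) (Fin N) ℝ) (hS : S = Lᵀ + L)
    (hherm : S.IsHermitian)
    (lam : ℝ)
    (hlam : lam = hherm.eigenvalues (Tuple.sort hherm.eigenvalues ⟨1, hN⟩)) :
    0 < lam ∧
    ∀ n : ℕ, 1 ≤ n → ∀ y : Fin N × Fin n → ℝ,
      (lam / 2) *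
        (((1 - ((((N : ℝ)⁻¹ • (Matrix.of fun _ _ => (1 : ℝ)) : Matrix (Fin N) (Fin N) ℝ))
            ⊗ₖ (1 : Matrix (Fin n) (Fin n) ℝ))) *ᵥ y) ⬝ᵥ
         ((1 - ((((N : ℝ)⁻¹ • (Matrix.of fun _ _ => (1 : ℝ)) : Matrix (Fin N) (Fin N) ℝ))
            ⊗ₖ (1 : Matrix (Fin n) (Fin n) ℝ))) *ᵥ y))
        ≤ y ⬝ᵥ ((L ⊗ₖ (1 : Matrix (Fin n) (Fin n) ℝ)) *ᵥ y) := by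
  have hSL : ∀ x, x ⬝ᵥ (S *ᵥ x) = 2 * (x ⬝ᵥ (L *ᵥ x)) := fun x => by
    rw [hS, dotProduct_transpose_add_mulVec_self]
  have hq : ∀ x, x ⬝ᵥ (S *ᵥ x) = dirichletEnergy W x := fun x => by
    rw [hSL, hL]
    exact two_mul_dotProduct_laplacian_mulVec hbal x
  refine ⟨hlam ▸ hherm.spectralGap_pos hWnn hconn hq hN, fun n _ y => ?_⟩
  set B : Matrix (Fin N) (Fin N) ℝ := (N : ℝ)⁻¹ • of fun _ _ => 1
  have hQ : (1 - B) ⊗ₖ (1 : Matrix (Fin n) (Fin n) ℝ) = 1 - B ⊗ₖ 1 :=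
    eq_sub_of_add_eq (by rw [← add_kronecker, sub_add_cancel, one_kronecker_one])
  rw [← hQ, dotProduct_eq_sum_slices, dotProduct_eq_sum_slices, Finset.mul_sum]
  refine Finset.sum_le_sum fun j _ => ?_
  rw [kronecker_one_mulVec_slice, kronecker_one_mulVec_slice]
  have := hherm.spectralGap_mul_le hWnn hconn hq hN fun v => y (v, j)
  rw [hSL, ← hlam] at this
  linarith
end

section
/- Let Ŵ ∈ ℝ^{m×m}, g : ℝ^m → ℝ^m, γ ∈ ℝ. Define the AugDGM sequence by ŷ⁰ = 0, v̂⁰ = Ŵ g(ŷ⁰), ŷ^{k+1} = Ŵ(ŷ^k − γ v̂^k), v̂^{k+1} = Ŵ(v̂^k + g(ŷ^{k+1}) − g(ŷ^k)); and define the ABC sequence by u⁰ = 0, ẑ⁰ = 0, u^{k+1} = Ŵ² u^k − γ Ŵ² g(u^k) − ẑ^k, ẑ^{k+1} = ẑ^k + (I − Ŵ)² u^{k+1}. Then ŷ^k = u^k for all k ∈ ℕ; in particular, both sequences satisfy the second-order recursion ŷ^{k+2} = 2Ŵ ŷ^{k+1} − Ŵ² ŷ^k − γ Ŵ² (g(ŷ^{k+1})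 − g(ŷ^k)). -/
open Matrix

/-- The AugDGM sequence (with tracking variable `v`) and the ABC sequence with
`A = B = Ŵ²`, `C = (I − Ŵ)²` coincide, and both satisfy the second-order recursion
`ŷ^{k+2} = 2Ŵ ŷ^{k+1} − Ŵ² ŷ^k − γ Ŵ² (g(ŷ^{k+1}) − g(ŷ^k))`. -/
theorem stmt_10 (m : ℕ) (W : Matrix (Fin m) (Fin m) ℝ)
    (g : (Fin m → ℝ) → (Fin m → ℝ)) (γ : ℝ)
    (y v u z : ℕ → Fin m → ℝ)
    (hy0 : y 0 = 0) (hv0 : v 0 = W *ᵥ g (y 0))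
    (hy : ∀ k, y (k + 1) = W *ᵥ (y k - γ • v k))
    (hv : ∀ k, v (k + 1) = W *ᵥ (v k + g (y (k + 1)) - g (y k)))
    (hu0 : u 0 = 0) (hz0 : z 0 = 0)
    (hu : ∀ k, u (k + 1) = (W * W) *ᵥ u k - γ • ((W * W) *ᵥ g (u k)) - z k)
    (hz : ∀ k, z (k + 1) = z k + ((1 - W) * (1 - W)) *ᵥ u (k + 1)) :
    (∀ k, y k = u k) ∧
    (∀ k, y (k + 2) = (2 : ℝ) • (W *ᵥ y (k + 1)) - (W * W) *ᵥ y k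
        - γ • ((W * W) *ᵥ (g (y (k + 1)) - g (y k)))) ∧
    (∀ k, u (k + 2) = (2 : ℝ) • (W *ᵥ u (k + 1)) - (W * W) *ᵥ u k
        - γ • ((W * W) *ᵥ (g (u (k + 1)) - g (u k)))) := by
  have hy2 : ∀ k, y (k + 2) = (2 : ℝ) • (W *ᵥ y (k + 1)) - (W * W) *ᵥ y k
      - γ • ((W * W) *ᵥ (g (y (k + 1)) - g (y k))) := by
    intro k
    have hWy : W *ᵥ y (k + 1) = (W * W) *ᵥ y k - γ • ((W * W) *ᵥ v k) := by
      rw [hy k]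
      simp [Matrix.mulVec_sub, Matrix.mulVec_smul, Matrix.mulVec_mulVec]
    have h1 : y (k + 2) = W *ᵥ (y (k + 1) - γ • v (k + 1)) := hy (k + 1)
    rw [h1, hv k]
    simp only [Matrix.mulVec_sub, Matrix.mulVec_add, Matrix.mulVec_smul,
      Matrix.mulVec_mulVec, smul_sub, smul_add, two_smul]
    rw [show W *ᵥ y (k + 1) = (W * W) *ᵥ y k - γ • ((W * W) *ᵥ v k) from hWy]
    module
  have hu2 : ∀ k, u (k + 2) = (2 : ℝ) • (W *ᵥ u (k + 1)) - (W * W) *ᵥ u k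
      - γ • ((W * W) *ᵥ (g (u (k + 1)) - g (u k))) := by
    intro k
    have hzk : z k = (W * W) *ᵥ u k - γ • ((W * W) *ᵥ g (u k)) - u (k + 1) := by
      rw [hu k]; abel
    have h1 : u (k + 2) = (W * W) *ᵥ u (k + 1) - γ • ((W * W) *ᵥ g (u (k + 1)))
        - z (k + 1) := hu (k + 1)
    rw [h1, hz k, hzk]
    have hexp : ((1 - W) * (1 - W)) = 1 - W - W + W * W := by noncomm_ring
    rw [hexp]
    simp only [Matrix.mulVec_sub, Matrix.mulVec_add, Matrix.sub_mulVec,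
      Matrix.add_mulVec, Matrix.one_mulVec, smul_sub, two_smul]
    module
  have key : ∀ k, y k = u k ∧ y (k + 1) = u (k + 1) := by
    intro k
    induction k with
    | zero =>
      constructor
      · rw [hy0, hu0]
      · rw [hy 0, hu 0, hv0, hy0, hz0, hu0]
        simp [Matrix.mulVec_sub, Matrix.mulVec_smul, Matrix.mulVec_mulVec,
          Matrix.mulVec_neg]
    | succ n ih =>
      refine ⟨ih.2, ?_⟩
      rw [hy2 n, hu2 n, ih.1, ih.2]
  exact ⟨fun k => (key k).1, hy2, hu2⟩
end

section
/- In the push-sum distributed optimization setup, define the block averages z̄_p^k := (1/N_p) Σ_{i∈V_p} ẑ_{i,p}^k, z̄^k := col((z̄_p^k)_{p=1,…,P}), and D := diag((N_p I_{n_p})_p). Then for every y* ∈ Y* and every k ∈ ℕ: ‖z̄^{k+1} − y*‖²_D ≤ ‖z̄^k − y*‖²_D − 2γ^k (f(z̄^k) − f(y*)) + 4L γ^k Σ_{i=1}^I Σ_{p : i∈V_p} ‖z̄_p^k − ŷ_{i,p}^{k+1}‖ + (γ^k)² I L². -/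
/-!
Summing the updates over the agents of a block, column stochasticity of `W_p^k` turns the block
averages into an inexact subgradient step
`z̄_p^{k+1} = z̄_p^k - (γ^k / N_p) Σ_{i ∈ V_p} g_{i,p}^{k+1}`.
Expanding the `D`-weighted square produces the cross term `-2γ^k Σ_i ⟨g_i^{k+1}, z̄^k - y*⟩` and a
quadratic term that Cauchy–Schwarz bounds by `(γ^k)² I L²`. The cross term is handled by the
subgradient inequality at the local estimate `ỹ_i^{k+1}`; moving between `ỹ_i^{k+1}` and `z̄^k`
costs `L Σ_p ‖z̄_p^k - ŷ_{i,p}^{k+1}‖` twice: once through `g_i^{k+1}` itself and once through a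
subgradient of `f_i` at `z̄^k`, which exists by Hahn–Banach.
-/

open Finset

noncomputable section PushSum12

/-- Euclidean inner product on the block space `ℝ^n = Π_p ℝ^{n_p}`. -/
def dotn {P : ℕ} (np : Fin P → ℕ) (u v : (p : Fin P) → Fin (np p) → ℝ) : ℝ :=
  ∑ p, ∑ r, u p r * v p r

theorem ConvexOn.exists_strongDual_le_sub {E : Type*} [TopologicalSpace E] [AddCommGroup E]
    [IsTopologicalAddGroup E] [Module ℝ E] [ContinuousSMul ℝ E] {f : E → ℝ}
    (hf : ConvexOn ℝ Set.univ f) (hcont : Continuous f) (x : E) :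
    ∃ φ : StrongDual ℝ E, ∀ z, φ (z - x) ≤ f z - f x := by
  -- Separate `(x, f x)` from the open strict epigraph; the separating functional has negative
  -- vertical slope `a`, and its horizontal part rescaled by `(-a)⁻¹` is the subgradient.
  have hconv : Convex ℝ {q : E × ℝ | f q.1 < q.2} := by
    simpa using hf.convex_strict_epigraph
  have hopen : IsOpen {q : E × ℝ | f q.1 < q.2} :=
    isOpen_lt (hcont.comp continuous_fst) continuous_snd
  obtain ⟨Φ, hΦ⟩ := geometric_hahn_banach_open_point hconv hopen (x := (x, f x)) (by simp)
  set a := Φ (0, 1)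
  have hsplit : ∀ z t, Φ (z, t) = Φ (z, 0) + t * a := fun z t => by
    rw [show (z, t) = (z, 0) + t • ((0 : E), (1 : ℝ)) by simp, map_add, map_smul, smul_eq_mul]
  have ha : 0 < -a := by
    have := hΦ (x, f x + 1) (by simp)
    rw [hsplit x, hsplit x (f x)] at this
    linarith
  refine ⟨(-a)⁻¹ • Φ.comp (.inl ℝ E ℝ), fun z => le_of_forall_pos_lt_add fun ε hε => ?_⟩
  have := hΦ (z, f z + ε) (by simpa using hε)
  rw [hsplit z, hsplit x] at this
  have hsub : Φ (z - x, 0) = Φ (z, 0) - Φ (x, 0) := by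
    rw [← map_sub, Prod.mk_sub_mk, sub_zero]
  simp only [smul_apply, ContinuousLinearMap.comp_apply,
    ContinuousLinearMap.inl_apply, smul_eq_mul, hsub]
  rw [inv_mul_lt_iff₀ ha]
  linarith

theorem Finset.sum_sum_coe_sort_eq_sum_sum {ι κ M : Type*} [Fintype ι] [Fintype κ]
    [AddCommMonoid M] (V : κ → Finset ι) (F : ι → κ → M) (hF : ∀ i p, i ∉ V p → F i p = 0) :
    ∑ p, ∑ i : V p, F i p = ∑ i, ∑ p, F i p := by
  rw [← Finset.sum_comm]
  refine Finset.sum_congr rfl fun p _ => ?_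
  rw [Finset.sum_coe_sort (V p) (F · p)]
  exact Finset.sum_subset (Finset.subset_univ _) fun i _ hi => hF i p hi

theorem card_mul_sq_avg_sub_le {ι : Type*} [Fintype ι] (x grad : ι → ℝ) (y γ : ℝ) :
    (Fintype.card ι : ℝ) * ((Fintype.card ι : ℝ)⁻¹ * (∑ i, x i - γ * ∑ i, grad i) - y) ^ 2
      ≤ (Fintype.card ι : ℝ) * ((Fintype.card ι : ℝ)⁻¹ * ∑ i, x i - y) ^ 2
        - 2 * γ * ∑ i, grad i * ((Fintype.card ι : ℝ)⁻¹ * ∑ i, x i - y)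
        + γ ^ 2 * ∑ i, grad i ^ 2 := by
  set N : ℝ := (Fintype.card ι : ℝ)
  set a := N⁻¹ * ∑ i, x i - y
  rcases isEmpty_or_nonempty ι with hι | hι
  · simp [N]
  have hN : N ≠ 0 := by positivity
  have hcs : (∑ i, grad i) ^ 2 ≤ N * ∑ i, grad i ^ 2 := by
    simpa using sq_sum_le_card_mul_sum_sq (s := Finset.univ) (f := grad)
  have hid : N * (N⁻¹ * (∑ i, x i - γ * ∑ i, grad i) - y) ^ 2
      = N * a ^ 2 - 2 * γ * ∑ i, grad i * a + γ ^ 2 * (N⁻¹ * (∑ i, grad i) ^ 2) := by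
    rw [← Finset.sum_mul]
    simp only [a]
    field_simp
    ring
  rw [hid]
  gcongr
  rwa [inv_mul_le_iff₀ (by positivity)]

section Blocks

variable {P : ℕ}

abbrev BlockVec (np : Fin P → ℕ) : Type := (p : Fin P) → Fin (np p) → ℝ

variable {np : Fin P → ℕ}

def blockNorm (v : BlockVec np) (p : Fin P) : ℝ :=
  √(∑ r, v p r ^ 2)

variable (np) in
def IsBlockSubgradient (F : BlockVec np → ℝ) (y g : BlockVec np) : Prop :=
  ∀ z, F y + dotn np g (z - y) ≤ F z

theorem exists_dotn_eq (φ : BlockVec np →ₗ[ℝ] ℝ) :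
    ∃ g, ∀ v, φ v = dotn np g v := by
  refine ⟨fun p r => φ (Pi.single p fun j => if r = j then 1 else 0), fun v => ?_⟩
  conv_lhs => rw [← Finset.univ_sum_single v]
  rw [map_sum, dotn]
  refine Finset.sum_congr rfl fun p _ => ?_
  exact ((φ.comp (LinearMap.single ℝ _ p)).pi_apply_eq_sum_univ (v p)).trans
    (Finset.sum_congr rfl fun r _ => (smul_eq_mul _ _).trans (mul_comm _ _))

theorem dotn_sub_right (g u v : BlockVec np) :
    dotn np g (u - v) = dotn np g u - dotn np g v := by
  simp only [dotn, Pi.sub_apply, mul_sub, Finset.sum_sub_distrib]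

theorem dotn_congr_right {g u v : BlockVec np} (s : Finset (Fin P)) (hg : ∀ p ∉ s, g p = 0)
    (huv : ∀ p ∈ s, u p = v p) : dotn np g u = dotn np g v := by
  refine Finset.sum_congr rfl fun p _ => ?_
  by_cases hp : p ∈ s
  · rw [huv p hp]
  · simp [hg p hp]

theorem blockNorm_le_sqrt_dotn_self (g : BlockVec np) (p : Fin P) :
    blockNorm g p ≤ √(dotn np g g) := by
  refine Real.sqrt_le_sqrt ?_
  simp only [dotn, ← sq]
  exact Finset.single_le_sum (f := fun q => ∑ r, g q r ^ 2)
    (fun q _ => Finset.sum_nonneg fun r _ => sq_nonneg _) (Finset.mem_univ p)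

theorem abs_dotn_le_sum_blockNorm_mul (g v : BlockVec np) :
    |dotn np g v| ≤ ∑ p, blockNorm g p * blockNorm v p :=
  (Finset.abs_sum_le_sum_abs _ _).trans <| Finset.sum_le_sum fun p _ =>
    (Finset.abs_sum_le_sum_abs _ _).trans <| by
      simpa only [abs_mul, sq_abs, blockNorm] using
        Real.sum_mul_le_sqrt_mul_sqrt Finset.univ (fun r => |g p r|) (fun r => |v p r|)

theorem abs_dotn_le_mul_sum_blockNorm {g v : BlockVec np} {L : ℝ} (hg : ∀ p, blockNorm g p ≤ L)
    (s : Finset (Fin P)) (hv : ∀ p ∉ s, v p = 0) :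
    |dotn np g v| ≤ L * ∑ p ∈ s, blockNorm v p := by
  have hvs : ∀ p ∉ s, blockNorm v p = 0 := fun p hp => by simp [blockNorm, hv p hp]
  calc |dotn np g v| ≤ ∑ p, blockNorm g p * blockNorm v p := abs_dotn_le_sum_blockNorm_mul g v
    _ = ∑ p ∈ s, blockNorm g p * blockNorm v p :=
      (Finset.sum_subset (Finset.subset_univ s) fun p _ hp => by rw [hvs p hp, mul_zero]).symm
    _ ≤ L * ∑ p ∈ s, blockNorm v p := by
      rw [Finset.mul_sum]
      exact Finset.sum_le_sum fun p _ =>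
        mul_le_mul_of_nonneg_right (hg p) (Real.sqrt_nonneg _)

theorem ConvexOn.exists_isBlockSubgradient {F : BlockVec np → ℝ}
    (hF : ConvexOn ℝ Set.univ F) (y : BlockVec np) : ∃ g, IsBlockSubgradient np F y g := by
  obtain ⟨φ, hφ⟩ := hF.exists_strongDual_le_sub hF.locallyLipschitz.continuous y
  obtain ⟨g, hg⟩ := exists_dotn_eq (φ : BlockVec np →ₗ[ℝ] ℝ)
  exact ⟨g, fun z => by have := hφ z; rw [← ContinuousLinearMap.coe_coe, hg] at this; linarith⟩

theorem IsBlockSubgradient.sub_le_dotn_sub_add {F : BlockVec np → ℝ} {L : ℝ} {t g : BlockVec np}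
    {s : Finset (Fin P)} (hg : IsBlockSubgradient np F t g) (hg0 : ∀ p ∉ s, g p = 0)
    (hF : ConvexOn ℝ Set.univ F) (hdep : ∀ y y', (∀ p ∈ s, y p = y' p) → F y = F y')
    (hbd : ∀ y g, IsBlockSubgradient np F y g → √(dotn np g g) ≤ L) (x y : BlockVec np) :
    F x - F y ≤ dotn np g (x - y) + 2 * L * ∑ p ∈ s, blockNorm (x - t) p := by
  classical
  -- Pass from `x` to `t` through `u`, which `F` cannot tell apart from `t`.
  set u : BlockVec np := fun p => if p ∈ s then t p else x p
  have hFu : F u = F t := hdep u t fun p hp => if_pos hp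
  have hxu : ∀ p ∉ s, (x - u) p = 0 := fun p hp => by simp [u, hp]
  have hnorm : ∑ p ∈ s, blockNorm (x - u) p = ∑ p ∈ s, blockNorm (x - t) p :=
    Finset.sum_congr rfl fun p hp => by simp [blockNorm, u, hp]
  have hgu : dotn np g (x - t) = dotn np g (x - u) :=
    dotn_congr_right s hg0 fun p hp => by simp [u, hp]
  have hblock : ∀ {y g}, IsBlockSubgradient np F y g → ∀ p, blockNorm g p ≤ L :=
    fun hg p => (blockNorm_le_sqrt_dotn_self _ p).trans (hbd _ _ hg)
  obtain ⟨sg, hsg⟩ := hF.exists_isBlockSubgradient x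
  have hsg_le := (abs_le.1 (abs_dotn_le_mul_sum_blockNorm (hblock hsg) s hxu)).2
  have hg_le := (abs_le.1 (abs_dotn_le_mul_sum_blockNorm (hblock hg) s hxu)).1
  have hx := hsg u
  have ht := hg y
  rw [hnorm] at hsg_le hg_le
  simp only [dotn_sub_right] at hgu hsg_le hg_le hx ht ⊢
  linarith

end Blocks

section Agents

variable {I P : ℕ} {np : Fin P → ℕ} (V : Fin P → Finset (Fin I))

def blockAvg (x : (p : Fin P) → V p → Fin (np p) → ℝ) : BlockVec np :=
  fun p r => ((V p).card : ℝ)⁻¹ * ∑ i, x p i r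

/-- `‖v‖²_D` for `D = diag (N_p I_{n_p})`. -/
def weightedNormSq (v : BlockVec np) : ℝ :=
  ∑ p, ((V p).card : ℝ) * ∑ r, v p r ^ 2

theorem weightedNormSq_blockAvg_sub_le (x x' : (p : Fin P) → V p → Fin (np p) → ℝ)
    (grad : Fin I → BlockVec np) (hgrad : ∀ i p, i ∉ V p → grad i p = 0) (y : BlockVec np)
    (γ : ℝ) (hx' : ∀ p r, ∑ i, x' p i r = ∑ i, x p i r - γ * ∑ i : V p, grad i p r) :
    weightedNormSq V (blockAvg V x' - y)
      ≤ weightedNormSq V (blockAvg V x - y)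
        - 2 * γ * ∑ i, dotn np (grad i) (blockAvg V x - y)
        + γ ^ 2 * ∑ i, dotn np (grad i) (grad i) := by
  have hswap : ∀ h : Fin I → BlockVec np, (∀ i p, i ∉ V p → h i p = 0) →
      ∑ p, ∑ r, ∑ i : V p, h i p r = ∑ i, ∑ p, ∑ r, h i p r := fun h hh => by
    refine (Finset.sum_congr rfl fun p _ => Finset.sum_comm).trans ?_
    exact Finset.sum_sum_coe_sort_eq_sum_sum V (fun i p => ∑ r, h i p r) fun i p hi => by
      simp [hh i p hi]
  calc weightedNormSq V (blockAvg V x' - y)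
      = ∑ p, ∑ r, ((V p).card : ℝ) * (((V p).card : ℝ)⁻¹
          * (∑ i, x p i r - γ * ∑ i : V p, grad i p r) - y p r) ^ 2 := by
        simp only [weightedNormSq, blockAvg, Pi.sub_apply, Finset.mul_sum, hx']
    _ ≤ ∑ p, ∑ r, (((V p).card : ℝ) * (blockAvg V x p r - y p r) ^ 2
          - 2 * γ * ∑ i : V p, grad i p r * (blockAvg V x p r - y p r)
          + γ ^ 2 * ∑ i : V p, grad i p r ^ 2) :=
        Finset.sum_le_sum fun p _ => Finset.sum_le_sum fun r _ => by
          simpa only [Fintype.card_coe, blockAvg] using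
            card_mul_sq_avg_sub_le (x p · r) (grad · p r) (y p r) γ
    _ = _ := by
      simp only [Finset.sum_add_distrib, Finset.sum_sub_distrib, ← Finset.mul_sum]
      rw [hswap (fun i p r => grad i p r * (blockAvg V x p r - y p r)),
        hswap (fun i p r => grad i p r ^ 2)]
      · simp [weightedNormSq, dotn, sq]
      all_goals intro i p hi; ext r; simp [hgrad i p hi]

/-- The point `ỹ_i` at which agent `i` takes its subgradient. -/
def localCopy (yloc : (p : Fin P) → V p → Fin (np p) → ℝ) (i : Fin I) : BlockVec np :=
  fun p => if h : i ∈ V p then yloc p ⟨i, h⟩ else 0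

def consensusGap (x : BlockVec np) (yloc : (p : Fin P) → V p → Fin (np p) → ℝ) (i : Fin I) : ℝ :=
  ∑ p, if h : i ∈ V p then √(∑ r, (x p r - yloc p ⟨i, h⟩ r) ^ 2) else 0

theorem sum_blockNorm_sub_localCopy_le_consensusGap (x : BlockVec np)
    (yloc : (p : Fin P) → V p → Fin (np p) → ℝ) {i : Fin I} {s : Finset (Fin P)}
    (hs : ∀ p ∈ s, i ∈ V p) :
    ∑ p ∈ s, blockNorm (x - localCopy V yloc i) p ≤ consensusGap V x yloc i := by
  classical
  calc ∑ p ∈ s, blockNorm (x - localCopy V yloc i) p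
      ≤ ∑ p with i ∈ V p, blockNorm (x - localCopy V yloc i) p :=
        Finset.sum_le_sum_of_subset_of_nonneg (fun p hp => by simpa using hs p hp)
          fun _ _ _ => Real.sqrt_nonneg _
    _ = consensusGap V x yloc i := by
      rw [Finset.sum_filter]
      refine Finset.sum_congr rfl fun p _ => ?_
      split_ifs with h
      · simp [blockNorm, localCopy, h]
      · rfl

end Agents

theorem stmt_12_general (I P : ℕ) (np : Fin P → ℕ)
    (V : Fin P → Finset (Fin I)) (Ns : Fin I → Finset (Fin P))
    (hNs : ∀ i p, p ∈ Ns i → i ∈ V p)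
    (f : Fin I → ((p : Fin P) → Fin (np p) → ℝ) → ℝ)
    (hconv : ∀ i, ConvexOn ℝ Set.univ (f i))
    (hdep : ∀ i y y', (∀ p ∈ Ns i, y p = y' p) → f i y = f i y')
    (L : ℝ)
    (hsubbd : ∀ (i : Fin I) (y g : (p : Fin P) → Fin (np p) → ℝ),
      (∀ z, f i y + dotn np g (z - y) ≤ f i z) → Real.sqrt (dotn np g g) ≤ L)
    (Wk : ℕ → (p : Fin P) → Matrix (V p) (V p) ℝ)
    (hWnn : ∀ k p (i j : V p), 0 ≤ Wk k p i j)
    (hWcol : ∀ k p (j : V p), ∑ i, Wk k p i j = 1)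
    (γ : ℕ → ℝ) (hγ : ∀ k, 0 < γ k)
    -- the push-sum iteration
    (ws zs ys : ℕ → (p : Fin P) → (V p) → Fin (np p) → ℝ)
    (g : ℕ → Fin I → (p : Fin P) → Fin (np p) → ℝ)
    (hw : ∀ k p (i : V p) r, ws (k + 1) p i r = ∑ j, Wk k p i j * zs k p j r)
    (hg0 : ∀ k (i : Fin I) (p : Fin P), p ∉ Ns i → g (k + 1) i p = 0)
    (hgsub : ∀ (k : ℕ) (i : Fin I),
      ∀ z, f i (fun p => if h : i ∈ V p then ys (k + 1) p ⟨i, h⟩ else 0)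
          + dotn np (g (k + 1) i)
              (z - fun p => if h : i ∈ V p then ys (k + 1) p ⟨i, h⟩ else 0)
        ≤ f i z)
    (hz : ∀ k p (i : V p) r,
      zs (k + 1) p i r = ws (k + 1) p i r - γ k * g (k + 1) (↑i) p r) :
    -- conclusion: for every minimizer y* and every k, the averaged inequality holds
    ∀ ystar : (p : Fin P) → Fin (np p) → ℝ,
      (∀ y, ∑ i, f i ystar ≤ ∑ i, f i y) →
      ∀ k : ℕ,
        (∑ p, ((V p).card : ℝ) * ∑ r,
            ((((V p).card : ℝ))⁻¹ * (∑ i, zs (k + 1) p i r) - ystar p r) ^ 2)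
          ≤ (∑ p, ((V p).card : ℝ) * ∑ r,
              ((((V p).card : ℝ))⁻¹ * (∑ i, zs k p i r) - ystar p r) ^ 2)
            - 2 * γ k * ((∑ i, f i fun p r => (((V p).card : ℝ))⁻¹ * ∑ i', zs k p i' r)
                - ∑ i, f i ystar)
            + 4 * L * γ k * ∑ i : Fin I, ∑ p : Fin P,
                (if h : i ∈ V p then
                  Real.sqrt (∑ r, ((((V p).card : ℝ))⁻¹ * (∑ i', zs k p i' r)
                      - ys (k + 1) p ⟨i, h⟩ r) ^ 2)
                 else 0)
            + (γ k) ^ 2 * I * L ^ 2 := by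
  intro ystar _ k
  set zbar := blockAvg V (zs k)
  have hsum : ∀ p r, ∑ i, zs (k + 1) p i r = ∑ i, zs k p i r - γ k * ∑ i : V p, g (k + 1) i p r :=
    fun p r => by
      simp only [hz, hw, Finset.sum_sub_distrib, ← Finset.mul_sum]
      congr 1
      exact Matrix.sum_mulVec_of_mem_colStochastic
        (Matrix.mem_colStochastic_iff_sum.2 ⟨hWnn k p, hWcol k p⟩)
  have hgrad_bound : ∀ i, 0 ≤ L ∧ dotn np (g (k + 1) i) (g (k + 1) i) ≤ L ^ 2 :=
    fun i => Real.sqrt_le_iff.1 (hsubbd i _ _ (hgsub k i))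
  have hagent : ∀ i, f i zbar - f i ystar
      ≤ dotn np (g (k + 1) i) (zbar - ystar) + 2 * L * consensusGap V zbar (ys (k + 1)) i :=
    fun i => by
      have hsub : IsBlockSubgradient np (f i) (localCopy V (ys (k + 1)) i) (g (k + 1) i) :=
        hgsub k i
      refine (hsub.sub_le_dotn_sub_add (hg0 k i) (hconv i) (hdep i) (hsubbd i) zbar ystar).trans ?_
      gcongr
      · linarith [(hgrad_bound i).1]
      · exact sum_blockNorm_sub_localCopy_le_consensusGap V zbar _ (hNs i)
  have hdesc := weightedNormSq_blockAvg_sub_le V (zs k) (zs (k + 1)) (g (k + 1))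
    (fun i p hi => hg0 k i p (mt (hNs i p) hi)) ystar (γ k) hsum
  have hcross := mul_le_mul_of_nonneg_left
    (Finset.sum_le_sum (s := Finset.univ) fun i _ => hagent i) (by linarith [hγ k] : 0 ≤ 2 * γ k)
  have hsq := mul_le_mul_of_nonneg_left
    (Finset.sum_le_sum (s := Finset.univ) fun i _ => (hgrad_bound i).2) (sq_nonneg (γ k))
  show weightedNormSq V (blockAvg V (zs (k + 1)) - ystar)
    ≤ weightedNormSq V (zbar - ystar) - 2 * γ k * (∑ i, f i zbar - ∑ i, f i ystar)
      + 4 * L * γ k * ∑ i, consensusGap V zbar (ys (k + 1)) i + γ k ^ 2 * I * L ^ 2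
  simp only [Finset.sum_sub_distrib, Finset.sum_add_distrib, ← Finset.mul_sum,
    Finset.sum_const, Finset.card_univ, Fintype.card_fin, nsmul_eq_mul] at hcross hsq
  linarith

/-- The basic inequality for the block averages `z̄^k` in the END push-sum
subgradient method (Lemma for Theorem on push-sum DGD). -/
theorem stmt_12 (I P : ℕ) (np : Fin P → ℕ)
    (V : Fin P → Finset (Fin I)) (Ns : Fin I → Finset (Fin P))
    (hNs : ∀ i p, p ∈ Ns i → i ∈ V p)
    (f : Fin I → ((p : Fin P) → Fin (np p) → ℝ) → ℝ)
    (hconv : ∀ i, ConvexOn ℝ Set.univ (f i))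
    (hdep : ∀ i y y', (∀ p ∈ Ns i, y p = y' p) → f i y = f i y')
    (L : ℝ) (hL : 0 < L)
    (hsubbd : ∀ (i : Fin I) (y g : (p : Fin P) → Fin (np p) → ℝ),
      (∀ z, f i y + dotn np g (z - y) ≤ f i z) → Real.sqrt (dotn np g g) ≤ L)
    (Wk : ℕ → (p : Fin P) → Matrix (V p) (V p) ℝ)
    (hWnn : ∀ k p (i j : V p), 0 ≤ Wk k p i j)
    (hWdiag : ∀ k p (i : V p), 0 < Wk k p i i)
    (hWcol : ∀ k p (j : V p), ∑ i, Wk k p i j = 1)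
    (ν : ℝ) (hν : 0 < ν)
    (hWν : ∀ k p (i j : V p), 0 < Wk k p i j → ν ≤ Wk k p i j)
    (γ : ℕ → ℝ) (hγ : ∀ k, 0 < γ k)
    -- the push-sum iteration
    (qs : ℕ → (p : Fin P) → (V p) → ℝ)
    (ws zs ys : ℕ → (p : Fin P) → (V p) → Fin (np p) → ℝ)
    (g : ℕ → Fin I → (p : Fin P) → Fin (np p) → ℝ)
    (hq0 : ∀ p (i : V p), qs 0 p i = 1)
    (hq : ∀ k p (i : V p), qs (k + 1) p i = ∑ j, Wk k p i j * qs k p j)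
    (hw : ∀ k p (i : V p) r, ws (k + 1) p i r = ∑ j, Wk k p i j * zs k p j r)
    (hy : ∀ k p (i : V p) r, ys (k + 1) p i r = ws (k + 1) p i r / qs (k + 1) p i)
    (hg0 : ∀ k (i : Fin I) (p : Fin P), p ∉ Ns i → g (k + 1) i p = 0)
    (hgsub : ∀ (k : ℕ) (i : Fin I),
      ∀ z, f i (fun p => if h : i ∈ V p then ys (k + 1) p ⟨i, h⟩ else 0)
          + dotn np (g (k + 1) i)
              (z - fun p => if h : i ∈ V p then ys (k + 1) p ⟨i, h⟩ else 0)
        ≤ f i z)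
    (hz : ∀ k p (i : V p) r,
      zs (k + 1) p i r = ws (k + 1) p i r - γ k * g (k + 1) (↑i) p r) :
    -- conclusion: for every minimizer y* and every k, the averaged inequality holds
    ∀ ystar : (p : Fin P) → Fin (np p) → ℝ,
      (∀ y, ∑ i, f i ystar ≤ ∑ i, f i y) →
      ∀ k : ℕ,
        (∑ p, ((V p).card : ℝ) * ∑ r,
            ((((V p).card : ℝ))⁻¹ * (∑ i, zs (k + 1) p i r) - ystar p r) ^ 2)
          ≤ (∑ p, ((V p).card : ℝ) * ∑ r,
              ((((V p).card : ℝ))⁻¹ * (∑ i, zs k p i r) - ystar p r) ^ 2)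
            - 2 * γ k * ((∑ i, f i fun p r => (((V p).card : ℝ))⁻¹ * ∑ i', zs k p i' r)
                - ∑ i, f i ystar)
            + 4 * L * γ k * ∑ i : Fin I, ∑ p : Fin P,
                (if h : i ∈ V p then
                  Real.sqrt (∑ r, ((((V p).card : ℝ))⁻¹ * (∑ i', zs k p i' r)
                      - ys (k + 1) p ⟨i, h⟩ r) ^ 2)
                 else 0)
            + (γ k) ^ 2 * I * L ^ 2 :=
  stmt_12_general I P np V Ns hNs f hconv hdep L hsubbd Wk hWnn hWcol γ hγ ws zs ys g hw hg0 hgsub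
    hz

end PushSum12
end

section
/- Let N ≥ 2 and let W = [[1, 0ᵀ],[c, W̄]] ∈ ℝ^{N×N} be nonnegative and row-stochastic (c ∈ ℝ^{N−1} nonnegative, W̄ ∈ ℝ^{(N−1)×(N−1)} nonnegative, c + W̄ 1_{N−1} = 1_{N−1}). Let X ∈ ℝ^{N×N} be symmetric positive definite with σ := ‖W − 1_N e_1ᵀ‖_X < 1, and partition X = [[X_{11}, X_{12}],[X_{12}ᵀ, X_{22}]] with X_{22} ∈ ℝ^{(N−1)×(N−1)}. Define Q := [[1 + 1ᵀ X_{22} 1, −1ᵀ X_{22}],[−X_{22} 1, X_{22}]]. Then: (a) e_1ᵀ W = e_1ᵀ, so q := e_1 is a nonnegative vector with qᵀ W = qᵀ and 1_Nᵀ q = 1; (b) Q is symmetric positive definite; (c) 1_Nᵀ Q = e_1ᵀ, so in particular the first entry of 1_Nᵀ Q equals 1; (d) 1_Nᵀ Q W (I_N − 1_N e_1ᵀ) = 0ᵀ; (e) ‖W − 1_N e_1ᵀ‖_Q ≤ σ < 1. -/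
/-!
Write `P = 1 e₁ᵀ`. Then `Q = E₁₁ + (I - P)ᵀ X (I - P)`, so `vᵀ Q v = v₁² + ‖(I - P) v‖_X²`;
as `I - P` is the identity on `{v₁ = 0}`, the `Q`- and `X`-norms agree there, which makes `Q`
positive definite. Since `1ᵀ (I - P)ᵀ = 0` we get `1ᵀ Q = e₁ᵀ`. The matrix `W - P` kills `1`
and has zero first row, so `(W - P) v = (W - P) (I - P) v` lies in `{v₁ = 0}` and
`‖(W - P) v‖_Q = ‖(W - P) (I - P) v‖_X ≤ σ ‖(I - P) v‖_X ≤ σ ‖v‖_Q`.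
-/

open Matrix Finset

variable {ι : Type*} [Fintype ι] [DecidableEq ι] {i₀ : ι}

variable (i₀) in
def consensusProj : Matrix ι ι ℝ := vecMulVec 1 (Pi.single i₀ 1)

lemma consensusProj_mulVec (v : ι → ℝ) : consensusProj i₀ *ᵥ v = v i₀ • 1 := by
  rw [consensusProj, vecMulVec_mulVec, single_one_dotProduct, op_smul_eq_smul]

lemma single_vecMul_consensusProj : Pi.single i₀ 1 ᵥ* consensusProj i₀ = Pi.single i₀ 1 := by
  rw [consensusProj, vecMul_vecMulVec, single_one_dotProduct, Pi.one_apply, one_smul]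

lemma one_sub_consensusProj_col (j : ι) :
    (1 - consensusProj i₀).col j =
      if j = i₀ then -∑ a ∈ univ.filter (· ≠ i₀), Pi.single a 1 else Pi.single j 1 := by
  ext a
  rcases eq_or_ne j i₀ with rfl | hj
  · by_cases ha : a = j <;> simp [consensusProj, ha, one_apply, Finset.sum_apply]
  · simp [consensusProj, hj, one_apply, Pi.single_apply, eq_comm]

lemma one_sub_consensusProj_mulVec_of_apply_eq_zero {v : ι → ℝ} (hv : v i₀ = 0) :
    (1 - consensusProj i₀) *ᵥ v = v := by
  ext
  simp [sub_mulVec, consensusProj_mulVec, hv]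

lemma one_sub_consensusProj_mulVec_one : (1 - consensusProj i₀) *ᵥ 1 = 0 := by
  ext
  simp [sub_mulVec, consensusProj_mulVec]

lemma mulVec_one_sub_consensusProj_mulVec {E : Matrix ι ι ℝ} (hE : E *ᵥ 1 = 0) (v : ι → ℝ) :
    E *ᵥ ((1 - consensusProj i₀) *ᵥ v) = E *ᵥ v := by
  rw [sub_mulVec, one_mulVec, mulVec_sub, consensusProj_mulVec, mulVec_smul, hE, smul_zero,
    sub_zero]

variable (i₀) in
def leaderLift (X : Matrix ι ι ℝ) : Matrix ι ι ℝ :=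
  single i₀ i₀ 1 + (1 - consensusProj i₀)ᵀ * X * (1 - consensusProj i₀)

lemma leaderLift_eq_of (X : Matrix ι ι ℝ) : leaderLift i₀ X = of fun i j =>
      if i = i₀ then
        (if j = i₀ then
          1 + ∑ a ∈ univ.filter (· ≠ i₀), ∑ b ∈ univ.filter (· ≠ i₀), X a b
         else -∑ a ∈ univ.filter (· ≠ i₀), X a j)
      else
        (if j = i₀ then -∑ b ∈ univ.filter (· ≠ i₀), X i b
         else X i j) := by
  ext i j
  rw [leaderLift, Matrix.add_apply, mul_mul_apply]
  change _ + (1 - consensusProj i₀).col i ⬝ᵥ X *ᵥ (1 - consensusProj i₀).col j = _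
  rw [one_sub_consensusProj_col, one_sub_consensusProj_col]
  by_cases hi : i = i₀ <;> by_cases hj : j = i₀ <;>
    simp [hi, hj, mulVec_neg, neg_dotProduct, dotProduct_neg, mulVec_sum, sum_dotProduct, Ne.symm]

lemma dotProduct_leaderLift_mulVec (X : Matrix ι ι ℝ) (v : ι → ℝ) :
    v ⬝ᵥ (leaderLift i₀ X *ᵥ v) =
      v i₀ * v i₀ + ((1 - consensusProj i₀) *ᵥ v) ⬝ᵥ (X *ᵥ ((1 - consensusProj i₀) *ᵥ v)) := by
  rw [leaderLift, add_mulVec, dotProduct_add, ← mulVec_mulVec, ← mulVec_mulVec,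
    dotProduct_mulVec _ (_ᵀ), vecMul_transpose, single_mulVec]
  simp [dotProduct, Function.update_apply]

lemma dotProduct_leaderLift_mulVec_of_apply_eq_zero (X : Matrix ι ι ℝ) {v : ι → ℝ}
    (hv : v i₀ = 0) : v ⬝ᵥ (leaderLift i₀ X *ᵥ v) = v ⬝ᵥ (X *ᵥ v) := by
  rw [dotProduct_leaderLift_mulVec, hv, one_sub_consensusProj_mulVec_of_apply_eq_zero hv,
    zero_mul, zero_add]

lemma Matrix.PosDef.leaderLift {X : Matrix ι ι ℝ} (hX : X.PosDef) :
    (leaderLift i₀ X).PosDef := by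
  have hsingle : (single i₀ i₀ (1 : ℝ)).IsHermitian := by
    rw [IsHermitian, conjTranspose_single, star_one]
  have hconj := hX.posSemidef.conjTranspose_mul_mul_same (1 - consensusProj i₀)
  rw [conjTranspose_eq_transpose_of_trivial] at hconj
  refine .of_dotProduct_mulVec_pos (hsingle.add hconj.isHermitian) fun v hv => ?_
  rw [star_trivial, dotProduct_leaderLift_mulVec]
  by_cases h : v i₀ = 0
  · rw [h, one_sub_consensusProj_mulVec_of_apply_eq_zero h, zero_mul, zero_add]
    simpa using hX.dotProduct_mulVec_pos hv
  · have := hX.posSemidef.dotProduct_mulVec_nonneg ((1 - consensusProj i₀) *ᵥ v)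
    rw [star_trivial] at this
    nlinarith [mul_self_pos.2 h]

lemma one_vecMul_leaderLift (X : Matrix ι ι ℝ) : 1 ᵥ* leaderLift i₀ X = Pi.single i₀ 1 := by
  rw [leaderLift, vecMul_add, ← vecMul_vecMul, ← vecMul_vecMul, vecMul_transpose,
    one_sub_consensusProj_mulVec_one, zero_vecMul, zero_vecMul, add_zero, ← transpose_single,
    vecMul_transpose, single_mulVec_eq, Pi.one_apply, mul_one, one_smul]

lemma sqrt_dotProduct_leaderLift_mulVec_le {E X : Matrix ι ι ℝ} (hE1 : E *ᵥ 1 = 0)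
    (hErow : E i₀ = 0) {σ : ℝ} (hσ : 0 ≤ σ)
    (hX : ∀ v, √((E *ᵥ v) ⬝ᵥ (X *ᵥ (E *ᵥ v))) ≤ σ * √(v ⬝ᵥ (X *ᵥ v))) (v : ι → ℝ) :
    √((E *ᵥ v) ⬝ᵥ (leaderLift i₀ X *ᵥ (E *ᵥ v))) ≤ σ * √(v ⬝ᵥ (leaderLift i₀ X *ᵥ v)) := by
  have hEv : (E *ᵥ v) i₀ = 0 := by simp [mulVec, hErow]
  set u := (1 - consensusProj i₀) *ᵥ v
  calc √((E *ᵥ v) ⬝ᵥ (leaderLift i₀ X *ᵥ (E *ᵥ v)))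
      = √((E *ᵥ u) ⬝ᵥ (X *ᵥ (E *ᵥ u))) := by
        rw [dotProduct_leaderLift_mulVec_of_apply_eq_zero X hEv,
          mulVec_one_sub_consensusProj_mulVec hE1]
    _ ≤ σ * √(u ⬝ᵥ (X *ᵥ u)) := hX u
    _ ≤ σ * √(v ⬝ᵥ (leaderLift i₀ X *ᵥ v)) := by
        gcongr
        rw [dotProduct_leaderLift_mulVec]
        exact le_add_of_nonneg_left (mul_self_nonneg _)

lemma one_vecMul_leaderLift_mul_mul_one_sub_consensusProj (X : Matrix ι ι ℝ)
    {W : Matrix ι ι ℝ} (hW : Pi.single i₀ 1 ᵥ* W = Pi.single i₀ 1) :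
    1 ᵥ* (leaderLift i₀ X * W * (1 - consensusProj i₀)) = 0 := by
  rw [← vecMul_vecMul, ← vecMul_vecMul, one_vecMul_leaderLift, hW, vecMul_sub, vecMul_one,
    single_vecMul_consensusProj, sub_self]

theorem stmt_14_general (n : ℕ) (W : Matrix (Fin (n + 2)) (Fin (n + 2)) ℝ)
    (hWrow : W *ᵥ (1 : Fin (n + 2) → ℝ) = 1)
    (hW00 : W 0 0 = 1) (hWtop : ∀ j, j ≠ 0 → W 0 j = 0)
    (X : Matrix (Fin (n + 2)) (Fin (n + 2)) ℝ)
    (hXpd : X.PosDef)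
    (J : Matrix (Fin (n + 2)) (Fin (n + 2)) ℝ)
    (hJ : J = Matrix.of fun _ j => if j = 0 then (1 : ℝ) else 0)
    (σ : ℝ)
    (hσ : IsLeast {c : ℝ | 0 ≤ c ∧ ∀ v : Fin (n + 2) → ℝ,
        Real.sqrt (((W - J) *ᵥ v) ⬝ᵥ (X *ᵥ ((W - J) *ᵥ v)))
          ≤ c * Real.sqrt (v ⬝ᵥ (X *ᵥ v))} σ)
    (hσlt : σ < 1)
    (Q : Matrix (Fin (n + 2)) (Fin (n + 2)) ℝ)
    (hQ : Q = Matrix.of fun i j =>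
      if i = 0 then
        (if j = 0 then
          1 + ∑ a ∈ univ.filter (· ≠ (0 : Fin (n + 2))),
              ∑ b ∈ univ.filter (· ≠ (0 : Fin (n + 2))), X a b
         else -∑ a ∈ univ.filter (· ≠ (0 : Fin (n + 2))), X a j)
      else
        (if j = 0 then -∑ b ∈ univ.filter (· ≠ (0 : Fin (n + 2))), X i b
         else X i j)) :
    -- (a) e₁ᵀ W = e₁ᵀ, q := e₁ is nonnegative with qᵀW = qᵀ and 1ᵀq = 1
    ((Pi.single 0 1 : Fin (n + 2) → ℝ) ᵥ* W = Pi.single 0 1 ∧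
      (∀ j, 0 ≤ (Pi.single 0 1 : Fin (n + 2) → ℝ) j) ∧
      ∑ j, (Pi.single 0 1 : Fin (n + 2) → ℝ) j = 1) ∧
    -- (b) Q is symmetric positive definite
    (Q.IsSymm ∧ Q.PosDef) ∧
    -- (c) 1ᵀ Q = e₁ᵀ
    ((1 : Fin (n + 2) → ℝ) ᵥ* Q = Pi.single 0 1) ∧
    -- (d) 1ᵀ Q W (I − 1e₁ᵀ) = 0ᵀ
    ((1 : Fin (n + 2) → ℝ) ᵥ* (Q * W * (1 - J)) = 0) ∧
    -- (e) ‖W − 1e₁ᵀ‖_Q ≤ σ < 1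
    ((∀ v : Fin (n + 2) → ℝ,
        Real.sqrt (((W - J) *ᵥ v) ⬝ᵥ (Q *ᵥ ((W - J) *ᵥ v)))
          ≤ σ * Real.sqrt (v ⬝ᵥ (Q *ᵥ v))) ∧ σ < 1) := by
  have hJ : J = consensusProj 0 := by
    ext i j
    simp [hJ, consensusProj, Pi.single_apply]
  have hQ : Q = leaderLift 0 X := by rw [hQ, leaderLift_eq_of]
  have hW0 : W 0 = Pi.single 0 1 := by
    ext j
    rcases eq_or_ne j 0 with rfl | hj
    · simp [hW00]
    · simp [hWtop j hj, hj]
  subst hJ hQ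
  have hleft : Pi.single 0 1 ᵥ* W = Pi.single 0 1 := by rw [single_one_vecMul, row, hW0]
  have hE1 : (W - consensusProj 0) *ᵥ 1 = 0 := by
    rw [sub_mulVec, hWrow, consensusProj_mulVec, Pi.one_apply, one_smul, sub_self]
  have hErow : (W - consensusProj (0 : Fin (n + 2))) 0 = 0 := by
    ext j
    simp [hW0, consensusProj, Pi.single_apply]
  have hq : ∀ j, 0 ≤ (Pi.single 0 1 : Fin (n + 2) → ℝ) j := fun j => by
    rw [Pi.single_apply]
    positivity
  have hQpd := hXpd.leaderLift (i₀ := 0)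
  exact ⟨⟨hleft, hq, by simp⟩,
    ⟨isHermitian_iff_isSymm.mp hQpd.isHermitian, hQpd⟩, one_vecMul_leaderLift X,
    one_vecMul_leaderLift_mul_mul_one_sub_consensusProj X hleft,
    ⟨sqrt_dotProduct_leaderLift_mulVec_le hE1 hErow hσ.1.1 hσ.1.2, hσlt⟩⟩

/-- Leader–follower weight matrix `W = [[1, 0ᵀ],[c, W̄]]` (row-stochastic, nonnegative):
with `X ≻ 0` such that `σ = ‖W − 1e₁ᵀ‖_X < 1`, the matrix
`Q = [[1 + 1ᵀX₂₂1, −1ᵀX₂₂],[−X₂₂1, X₂₂]]` is symmetric positive definite and satisfies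
`e₁ᵀW = e₁ᵀ`, `1ᵀQ = e₁ᵀ`, `1ᵀQW(I − 1e₁ᵀ) = 0ᵀ` and `‖W − 1e₁ᵀ‖_Q ≤ σ < 1`. -/
theorem stmt_14 (n : ℕ) (W : Matrix (Fin (n + 2)) (Fin (n + 2)) ℝ)
    (hWnn : ∀ i j, 0 ≤ W i j)
    (hWrow : W *ᵥ (1 : Fin (n + 2) → ℝ) = 1)
    (hW00 : W 0 0 = 1) (hWtop : ∀ j, j ≠ 0 → W 0 j = 0)
    (X : Matrix (Fin (n + 2)) (Fin (n + 2)) ℝ)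
    (hXsym : X.IsSymm) (hXpd : X.PosDef)
    (J : Matrix (Fin (n + 2)) (Fin (n + 2)) ℝ)
    (hJ : J = Matrix.of fun _ j => if j = 0 then (1 : ℝ) else 0)
    (σ : ℝ)
    (hσ : IsLeast {c : ℝ | 0 ≤ c ∧ ∀ v : Fin (n + 2) → ℝ,
        Real.sqrt (((W - J) *ᵥ v) ⬝ᵥ (X *ᵥ ((W - J) *ᵥ v)))
          ≤ c * Real.sqrt (v ⬝ᵥ (X *ᵥ v))} σ)
    (hσlt : σ < 1)
    (Q : Matrix (Fin (n + 2)) (Fin (n + 2)) ℝ)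
    (hQ : Q = Matrix.of fun i j =>
      if i = 0 then
        (if j = 0 then
          1 + ∑ a ∈ univ.filter (· ≠ (0 : Fin (n + 2))),
              ∑ b ∈ univ.filter (· ≠ (0 : Fin (n + 2))), X a b
         else -∑ a ∈ univ.filter (· ≠ (0 : Fin (n + 2))), X a j)
      else
        (if j = 0 then -∑ b ∈ univ.filter (· ≠ (0 : Fin (n + 2))), X i b
         else X i j)) :
    -- (a) e₁ᵀ W = e₁ᵀ, q := e₁ is nonnegative with qᵀW = qᵀ and 1ᵀq = 1
    ((Pi.single 0 1 : Fin (n + 2) → ℝ) ᵥ* W = Pi.single 0 1 ∧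
      (∀ j, 0 ≤ (Pi.single 0 1 : Fin (n + 2) → ℝ) j) ∧
      ∑ j, (Pi.single 0 1 : Fin (n + 2) → ℝ) j = 1) ∧
    -- (b) Q is symmetric positive definite
    (Q.IsSymm ∧ Q.PosDef) ∧
    -- (c) 1ᵀ Q = e₁ᵀ
    ((1 : Fin (n + 2) → ℝ) ᵥ* Q = Pi.single 0 1) ∧
    -- (d) 1ᵀ Q W (I − 1e₁ᵀ) = 0ᵀ
    ((1 : Fin (n + 2) → ℝ) ᵥ* (Q * W * (1 - J)) = 0) ∧
    -- (e) ‖W − 1e₁ᵀ‖_Q ≤ σ < 1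
    ((∀ v : Fin (n + 2) → ℝ,
        Real.sqrt (((W - J) *ᵥ v) ⬝ᵥ (Q *ᵥ ((W - J) *ᵥ v)))
          ≤ σ * Real.sqrt (v ⬝ᵥ (Q *ᵥ v))) ∧ σ < 1) :=
  stmt_14_general n W hWrow hW00 hWtop X hXpd J hJ σ hσ hσlt Q hQ
end
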